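/- arXiv:2503.06600 — 3 statements merged into one kernel-verified Lean document; each statement's English description precedes it below -/
import Mathlib

section
/- Let q be a prime power with q ≡ 1 (mod 12) and let n = (q+3)/4, so that C_n = {a ∈ F_q : aⁿ = a} is the set of fourth powers in F_q (including 0). Then C_n ∪ (C_n + 1) ∪ (C_n + z) ∪ (C_n + z²) ≠ F_q, where z is a primitive cube root of unity. -/
open Polynomial

lemma aux_ncard_le {F : Type*} [Field F] [Fintype F] (n : ℕ) (hn2 : 2 ≤ n) :
    ({a : F | a ^ n = a}).ncard ≤ n := by
  classical
  set p : F[X] := X ^ n - X with hp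
  have hdeg : p.natDegree = n := by
    rw [hp, natDegree_sub_eq_left_of_natDegree_lt]
    · exact natDegree_X_pow n
    · rw [natDegree_X, natDegree_X_pow]; omega
  have hp0 : p ≠ 0 := by
    intro h
    rw [h, natDegree_zero] at hdeg
    omega
  have hsub : {a : F | a ^ n = a} ⊆ ↑p.roots.toFinset := by
    intro a ha
    simp only [Set.mem_setOf_eq] at ha
    simp only [Finset.coe_sort_coe, Multiset.mem_toFinset, Finset.mem_coe,
      mem_roots hp0, IsRoot.def, hp, eval_sub, eval_pow, eval_X]
    rw [← hp, mem_roots hp0, IsRoot.def, hp, eval_sub, eval_pow, eval_X, ha, sub_self]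
  calc ({a : F | a ^ n = a}).ncard ≤ (↑p.roots.toFinset : Set F).ncard :=
        Set.ncard_le_ncard hsub (Set.toFinite _)
    _ = p.roots.toFinset.card := Set.ncard_coe_finset _
    _ ≤ Multiset.card p.roots := Multiset.toFinset_card_le _
    _ ≤ p.natDegree := card_roots' p
    _ = n := hdeg

/-- If `q ≡ 1 (mod 12)` and `n = (q+3)/4`, with `C = {a : aⁿ = a}` and `z` a
primitive cube root of unity, then `C ∪ (C+1) ∪ (C+z) ∪ (C+z²) ≠ F_q`. -/
theorem stmt5 {F : Type*} [Field F] [Fintype F]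
    (hq : Fintype.card F % 12 = 1)
    (n : ℕ) (hn : n = (Fintype.card F + 3) / 4)
    (z : F) (hz : orderOf z = 3)
    (C : Set F) (hC : C = {a : F | a ^ n = a}) :
    C ∪ ((fun c => c + 1) '' C) ∪ ((fun c => c + z) '' C)
        ∪ ((fun c => c + z ^ 2) '' C) ≠ Set.univ := by
  set q := Fintype.card F with hqdef
  have hq2 : 2 ≤ q := Fintype.one_lt_card
  have hq13 : 13 ≤ q := by omega
  obtain ⟨k, hk⟩ : ∃ k, q = 12 * k + 1 := ⟨q / 12, by omega⟩
  have hk1 : 1 ≤ k := by omega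
  have hnk : n = 3 * k + 1 := by omega
  have hz3 : z ^ 3 = 1 := by rw [← hz]; exact pow_orderOf_eq_one z
  -- memberships
  have h0C : (0 : F) ∈ C := by
    rw [hC]; simp only [Set.mem_setOf_eq]
    rw [zero_pow]; omega
  have h1C : (1 : F) ∈ C := by rw [hC]; simp
  have hzC : z ∈ C := by
    rw [hC]; simp only [Set.mem_setOf_eq]
    rw [hnk, pow_succ, pow_mul, hz3, one_pow, one_mul]
  have hz2C : z ^ 2 ∈ C := by
    rw [hC]; simp only [Set.mem_setOf_eq]
    rw [← pow_mul, hnk]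
    have : 2 * (3 * k + 1) = 3 * (2 * k) + 2 := by ring
    rw [this, pow_add, pow_mul, hz3, one_pow, one_mul]
  have hz1 : z ≠ 1 + z := by
    intro h
    nth_rewrite 1 [← zero_add z] at h
    exact zero_ne_one (add_right_cancel h)
  -- finiteness
  have fC : C.Finite := Set.toFinite _
  set A : Set F := (fun c => c + 1) '' C with hA
  set B : Set F := (fun c => c + z) '' C with hB
  set D : Set F := (fun c => c + z ^ 2) '' C with hD
  have fA : A.Finite := Set.toFinite _
  have fB : B.Finite := Set.toFinite _
  have fD : D.Finite := Set.toFinite _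
  -- translate cardinalities
  have hcA : A.ncard = C.ncard := Set.ncard_image_of_injective _ (add_left_injective 1)
  have hcB : B.ncard = C.ncard := Set.ncard_image_of_injective _ (add_left_injective z)
  have hcD : D.ncard = C.ncard := Set.ncard_image_of_injective _ (add_left_injective (z ^ 2))
  have hCn : C.ncard ≤ n := by rw [hC]; exact aux_ncard_le n (by omega)
  -- overlap elements
  have h1A : (1 : F) ∈ A := ⟨0, h0C, by simp⟩
  have hzB : z ∈ B := ⟨0, h0C, by simp⟩
  have h1zB : 1 + z ∈ B := ⟨1, h1C, by ring⟩
  have hz2D : z ^ 2 ∈ D := ⟨0, h0C, by simp⟩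
  -- intersection lower bounds
  have i1 : 1 ≤ (C ∩ A).ncard := by
    exact (Set.ncard_pos (Set.toFinite _)).mpr ⟨1, h1C, h1A⟩
  have i2 : 2 ≤ ((C ∪ A) ∩ B).ncard := by
    have hsub : ({z, 1 + z} : Set F) ⊆ (C ∪ A) ∩ B := by
      intro x hx
      rcases hx with rfl | hx
      · exact ⟨Or.inl hzC, hzB⟩
      · rcases hx with rfl
        exact ⟨Or.inr ⟨z, hzC, add_comm z 1⟩, h1zB⟩
    calc 2 = ({z, 1 + z} : Set F).ncard := (Set.ncard_pair hz1).symm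
      _ ≤ ((C ∪ A) ∩ B).ncard := Set.ncard_le_ncard hsub (Set.toFinite _)
  have i3 : 1 ≤ ((C ∪ A ∪ B) ∩ D).ncard := by
    exact (Set.ncard_pos (Set.toFinite _)).mpr ⟨z ^ 2, Or.inl (Or.inl hz2C), hz2D⟩
  -- card of unions
  have e1 := Set.ncard_union_add_ncard_inter C A fC fA
  have e2 := Set.ncard_union_add_ncard_inter (C ∪ A) B (fC.union fA) fB
  have e3 := Set.ncard_union_add_ncard_inter (C ∪ A ∪ B) D ((fC.union fA).union fB) fD
  intro hcontra
  have huniv : (C ∪ A ∪ B ∪ D).ncard = q := by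
    rw [hcontra, Set.ncard_univ, Nat.card_eq_fintype_card]
  omega
end

section
/- Let q be a prime power, n > 1 an integer, and m = gcd(n - 1, q - 1) + 1. Then the set of n-potents of F_q equals the set of m-potents: {a ∈ F_q : aⁿ = a} = {a ∈ F_q : aᵐ = a}. -/
/-- In `F_q`, for `n > 1` and `m = gcd(n-1, q-1) + 1`, the `n`-potents coincide
with the `m`-potents. -/
theorem stmt18 {F : Type*} [Field F] [Fintype F] (n : ℕ) (hn : 1 < n)
    (m : ℕ) (hm : m = Nat.gcd (n - 1) (Fintype.card F - 1) + 1) :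
    {a : F | a ^ n = a} = {a : F | a ^ m = a} := by
  ext a
  simp only [Set.mem_setOf_eq]
  rcases eq_or_ne a 0 with rfl | ha
  · rw [zero_pow (by omega), zero_pow (by omega)]
  · have hq : a ^ (Fintype.card F - 1) = 1 := FiniteField.pow_card_sub_one_eq_one a ha
    have hdvd : orderOf a ∣ Fintype.card F - 1 := orderOf_dvd_of_pow_eq_one hq
    have h1 : ∀ k : ℕ, a ^ (k + 1) = a ↔ a ^ k = 1 := fun k => by
      rw [pow_succ]
      exact ⟨fun h => mul_right_cancel₀ ha (by rw [h, one_mul]),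
             fun h => by rw [h, one_mul]⟩
    have hn' : n = (n - 1) + 1 := by omega
    rw [hn', hm, h1, h1, ← orderOf_dvd_iff_pow_eq_one, ← orderOf_dvd_iff_pow_eq_one,
      Nat.dvd_gcd_iff]
    tauto
end

section
/- Let q be an odd prime power and suppose every element of F_q can be written as the sum of a 2-potent (idempotent, i.e., element of {0,1}) and an n-potent where 1 < n < q and (n-1) | (q-1). If q ≢ 1 (mod 3), then n - 1 = (q-1)/2 (equivalently n = (q+3)/2) and the n-potents are exactly the squares in F_q. -/
/-- If `q` is odd, `q ≢ 1 (mod 3)`, `1 < n < q`, `(n-1) ∣ (q-1)`, and every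
element of `F_q` is the sum of a 2-potent (element of `{0,1}`) and an
`n`-potent (i.e. `C_n ∪ (C_n + 1) = F_q`), then `n - 1 = (q-1)/2` and the
`n`-potents are exactly the squares of `F_q`. -/
theorem stmt19 {F : Type*} [Field F] [Fintype F]
    (hodd : Odd (Fintype.card F)) (hq3 : Fintype.card F % 3 ≠ 1)
    (n : ℕ) (hn1 : 1 < n) (hnq : n < Fintype.card F)
    (hdvd : (n - 1) ∣ (Fintype.card F - 1))
    (hcover : {a : F | a ^ n = a} ∪ ((fun c => c + 1) '' {a : F | a ^ n = a})
      = Set.univ) :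
    n - 1 = (Fintype.card F - 1) / 2 ∧ {a : F | a ^ n = a} = {a : F | IsSquare a} := by
  obtain ⟨k, hk⟩ := hodd
  have hchar : ringChar F ≠ 2 := by
    intro h
    have := FiniteField.even_card_of_char_two h
    omega
  set q := Fintype.card F with hq
  set S : Set F := {a : F | a ^ n = a} with hS
  -- S is contained in the root set of X^n - X
  have hSn : S.ncard ≤ n := by
    classical
    set p : Polynomial F := Polynomial.X ^ n - Polynomial.X with hp
    have hp0 : p ≠ 0 := by
      intro h
      have : p.coeff n = 1 := by
        simp [hp, Polynomial.coeff_X_pow, Polynomial.coeff_X, Ne.symm (Nat.ne_of_lt hn1)]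
        omega
      rw [h] at this
      simp at this
    have hsub : S ⊆ ↑p.roots.toFinset := by
      intro a ha
      simp only [Multiset.mem_toFinset, Polynomial.mem_roots hp0, Finset.coe_sort_coe,
        Polynomial.IsRoot.def, hp, Polynomial.eval_sub, Polynomial.eval_pow,
        Polynomial.eval_X, Finset.mem_coe]
      exact (Polynomial.mem_roots (by rw [← hp]; exact hp0)).mpr (by
        simp only [Polynomial.IsRoot.def, Polynomial.eval_sub, Polynomial.eval_pow,
          Polynomial.eval_X]
        exact sub_eq_zero.mpr ha)
    calc S.ncard ≤ p.roots.toFinset.card := Set.ncard_le_ncard hsub (Set.toFinite _) |>.trans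
          (by rw [Set.ncard_coe_finset])
      _ ≤ Multiset.card p.roots := Multiset.toFinset_card_le _
      _ ≤ p.natDegree := Polynomial.card_roots' p
      _ ≤ n := by
          rw [hp]
          refine (Polynomial.natDegree_sub_le _ _).trans ?_
          simp [Polynomial.natDegree_X_pow]
          omega
  have hq2n : q ≤ 2 * n := by
    have h1 : (Set.univ : Set F).ncard = q := by simp [Set.ncard_univ, Nat.card_eq_fintype_card]; rfl
    have h2 : ((fun c : F => c + 1) '' S).ncard = S.ncard :=
      Set.ncard_image_of_injective _ (add_left_injective 1)
    have h3 := Set.ncard_union_le S ((fun c : F => c + 1) '' S)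
    rw [h2, hcover, h1] at h3
    omega
  -- n-1 is a proper divisor of q-1, so 2*(n-1) ≤ q-1
  have hle : 2 * (n - 1) ≤ q - 1 := by
    obtain ⟨m, hm⟩ := hdvd
    have hm2 : 2 ≤ m := by
      rcases m with _ | _ | m
      · omega
      · omega
      · omega
    calc 2 * (n - 1) ≤ (n - 1) * m := by nlinarith
      _ = q - 1 := hm.symm
  have hkey : 2 * (n - 1) = q - 1 := by omega
  refine ⟨by omega, ?_⟩
  ext a
  rw [hS]
  simp only [Set.mem_setOf_eq]
  rcases eq_or_ne a 0 with rfl | ha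
  · simp [zero_pow (by omega : n ≠ 0)]
  · rw [FiniteField.isSquare_iff hchar ha]
    have hdiv : q / 2 = n - 1 := by omega
    rw [hdiv]
    constructor
    · intro h
      have : a ^ (n - 1) * a = a := by
        rw [← pow_succ]
        have : n - 1 + 1 = n := by omega
        rw [this]; exact h
      exact mul_right_cancel₀ ha (this.trans (one_mul a).symm)
    · intro h
      have : n = (n - 1) + 1 := by omega
      rw [this, pow_succ, h, one_mul]
end
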